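/- Let z be a positive integer with z ≠ 2, and let p be the smallest prime number satisfying 4z+1 ≤ p ≤ 5z. Then for every integer r with 1 ≤ r ≤ p, there exists a [z,r;5]-mixed graph of order 2pr; in particular n[z,r;5] ≤ 2pr. -/

import Mathlib

/-!
The vertices are triples `(side, x, i)` with `x ∈ ZMod p` and `i < r`. The undirected part is
the incidence graph between points `(x, i)` and lines `[y, j]` with `y = x + i j`: every vertex
has exactly one neighbour of each slope, and a 4-cycle would force `(i - i') (j - j') = 0`, so
there is none. The arcs add one of `1, …, z` to `x`, keeping side and slope. Edges change the
side, so a closed walk of length at most 4 that uses an arc has zero or two edges, and in the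
latter case the two edge displacements cancel. Either way its arcs add up to `0` in `ZMod p`,
impossible for one to four arcs as `4z < p`; the arcs `z, z, z, z, p - 4z` close a 5-cycle
since `p ≤ 5z`.
-/

/-- A mixed graph: a simple undirected graph together with a loopless arc
relation on the same vertex set, such that no pair of vertices joined by an
edge is also joined by an arc in either direction. -/
structure MixedGraph (V : Type) where
  edge : SimpleGraph V
  arc : V → V → Prop
  arc_irrefl : ∀ v, ¬ arc v v
  no_overlap : ∀ u v, edge.Adj u v → ¬ arc u v ∧ ¬ arc v u

namespace MixedGraph

variable {V : Type}

/-- A single step of a walk in a mixed graph: traverse an edge (in either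
direction, since `edge.Adj` is symmetric) or an arc from tail to head. -/
def Step (M : MixedGraph V) (u v : V) : Prop :=
  M.edge.Adj u v ∨ M.arc u v

/-- `M` has a cycle of length `n`: a cyclic sequence of `n ≥ 3` pairwise
distinct vertices, each consecutive pair joined by a step. -/
def HasCycleOfLength (M : MixedGraph V) (n : ℕ) : Prop :=
  3 ≤ n ∧ ∃ c : ZMod n → V, Function.Injective c ∧ ∀ i, M.Step (c i) (c (i + 1))

/-- `M` has girth `g`: it has a cycle of length `g` and no shorter cycle. -/
def HasGirth (M : MixedGraph V) (g : ℕ) : Prop :=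
  M.HasCycleOfLength g ∧ ∀ n, M.HasCycleOfLength n → g ≤ n

/-- `M` is a `[z,r;g]`-mixed graph: every vertex has out-degree `z` and
in-degree `z` in the arc relation, degree `r` in the undirected graph, and
the girth of `M` is `g`. -/
def IsMixed (M : MixedGraph V) (z r g : ℕ) : Prop :=
  (∀ v, Nat.card {w // M.arc v w} = z) ∧
  (∀ v, Nat.card {w // M.arc w v} = z) ∧
  (∀ v, Nat.card {w // M.edge.Adj v w} = r) ∧
  M.HasGirth g

/-- A `[z,r;g]`-mixed cage: a finite `[z,r;g]`-mixed graph of minimum order. -/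
def IsCage (M : MixedGraph V) (z r g : ℕ) : Prop :=
  Finite V ∧ M.IsMixed z r g ∧
    ∀ (n : ℕ) (M' : MixedGraph (Fin n)), M'.IsMixed z r g → Nat.card V ≤ n

end MixedGraph

/-- `n[z,r;g]`: the minimum order of a `[z,r;g]`-mixed graph. -/
noncomputable def mixedCageNum (z r g : ℕ) : ℕ :=
  sInf {n : ℕ | ∃ M : MixedGraph (Fin n), M.IsMixed z r g}

namespace MixedGraph

variable {V W : Type}

def comap (e : W ≃ V) (M : MixedGraph V) : MixedGraph W where
  edge := M.edge.comap e
  arc u v := M.arc (e u) (e v)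
  arc_irrefl v := M.arc_irrefl (e v)
  no_overlap u v := M.no_overlap (e u) (e v)

theorem hasCycleOfLength_comap {M : MixedGraph V} (e : W ≃ V) {n : ℕ} :
    (M.comap e).HasCycleOfLength n ↔ M.HasCycleOfLength n := by
  constructor
  · rintro ⟨hn, c, hc, hstep⟩
    exact ⟨hn, e ∘ c, e.injective.comp hc, hstep⟩
  · rintro ⟨hn, c, hc, hstep⟩
    refine ⟨hn, e.symm ∘ c, e.symm.injective.comp hc, fun i => ?_⟩
    simpa [Step, comap] using hstep i

theorem IsMixed.comap {M : MixedGraph V} {z r g : ℕ} (h : M.IsMixed z r g) (e : W ≃ V) :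
    (M.comap e).IsMixed z r g := by
  obtain ⟨hout, hin, hdeg, hcyc, hmin⟩ := h
  refine ⟨fun v => ?_, fun v => ?_, fun v => ?_,
    (hasCycleOfLength_comap e).2 hcyc, fun n hn => hmin n ((hasCycleOfLength_comap e).1 hn)⟩
  · exact (Nat.card_congr (e.subtypeEquiv fun _ => Iff.rfl)).trans (hout (e v))
  · exact (Nat.card_congr (e.subtypeEquiv fun _ => Iff.rfl)).trans (hin (e v))
  · exact (Nat.card_congr (e.subtypeEquiv fun _ => Iff.rfl)).trans (hdeg (e v))

end MixedGraph

def ZeroSumFreeUpTo {R : Type} [AddMonoid R] (D : Set R) (n : ℕ) : Prop :=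
  ∀ l : List R, l ≠ [] → l.length ≤ n → (∀ d ∈ l, d ∈ D) → l.sum ≠ 0

namespace ZeroSumFreeUpTo

variable {R : Type} [AddMonoid R] {D : Set R} {n : ℕ}

theorem mono (h : ZeroSumFreeUpTo D n) {k : ℕ} (hk : k ≤ n) : ZeroSumFreeUpTo D k :=
  fun l hl hlk => h l hl (hlk.trans hk)

theorem zero_notMem (h : ZeroSumFreeUpTo D n) (hn : 1 ≤ n) : (0 : R) ∉ D :=
  fun h0 => h [0] (by simp) (by simpa using hn) (by simpa using h0) (by simp)

end ZeroSumFreeUpTo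

namespace Biaffine

@[ext]
structure Vertex (R S : Type) where
  side : Bool
  pos : R
  line : S

def Vertex.equivProd (R S : Type) : Vertex R S ≃ Bool × R × S where
  toFun v := (v.side, v.pos, v.line)
  invFun t := ⟨t.1, t.2.1, t.2.2⟩
  left_inv _ := rfl
  right_inv _ := rfl

instance [Finite R] [Finite S] : Finite (Vertex R S) :=
  Finite.of_equiv _ (Vertex.equivProd R S).symm

theorem natCard_vertex (R S : Type) : Nat.card (Vertex R S) = 2 * Nat.card R * Nat.card S := by
  rw [Nat.card_congr (Vertex.equivProd R S), Nat.card_prod, Nat.card_prod, Nat.card_eq_fintype_card,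
    Fintype.card_bool, mul_assoc]

variable {R S : Type} [CommRing R]

def sideSign (b : Bool) : R := if b then -1 else 1

@[simp]
theorem sideSign_not (b : Bool) : sideSign (!b) = -(sideSign b : R) := by
  cases b <;> simp [sideSign]

theorem sideSign_ne_zero [Nontrivial R] (b : Bool) : (sideSign b : R) ≠ 0 := by
  cases b <;> simp [sideSign]

variable (m : S → R) (D : Set R)

/-- Side `false` holds the points `(x, i)` and side `true` the lines `[y, j]`; the point
`(x, i)` lies on the line `[y, j]` iff `y = x + m i * m j`. -/
def graph : SimpleGraph (Vertex R S) where
  Adj u v := v.side = !u.side ∧ v.pos = u.pos + sideSign u.side * (m u.line * m v.line)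
  symm := ⟨fun u v h => ⟨by simp [h.1], by rw [h.1, h.2, sideSign_not]; ring⟩⟩
  loopless := ⟨fun v h => by simp at h⟩

structure Shift (u v : Vertex R S) : Prop where
  side_eq : v.side = u.side
  line_eq : v.line = u.line
  pos_sub_mem : v.pos - u.pos ∈ D

def mixedGraph (hD : (0 : R) ∉ D) : MixedGraph (Vertex R S) where
  edge := graph m
  arc := Shift D
  arc_irrefl v h := hD (by simpa using h.pos_sub_mem)
  no_overlap u v h := ⟨fun h' => by simpa [h'.side_eq] using h.1,
    fun h' => by simpa [h'.side_eq] using h.1⟩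

def neighbor (v : Vertex R S) (j : S) : Vertex R S :=
  ⟨!v.side, v.pos + sideSign v.side * (m v.line * m j), j⟩

variable {m D}

theorem side_eq_of_adj {u v : Vertex R S} (h : (graph m).Adj u v) : v.side = !u.side := h.1

theorem pos_eq_of_adj {u v : Vertex R S} (h : (graph m).Adj u v) :
    v.pos = u.pos + sideSign u.side * (m u.line * m v.line) := h.2

theorem eq_of_adj_of_adj {u v w : Vertex R S} (hv : (graph m).Adj u v) (hw : (graph m).Adj u w)
    (hl : v.line = w.line) : v = w := by
  ext
  · rw [side_eq_of_adj hv, side_eq_of_adj hw]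
  · rw [pos_eq_of_adj hv, pos_eq_of_adj hw, hl]
  · exact hl

theorem adj_neighbor (v : Vertex R S) (j : S) : (graph m).Adj v (neighbor m v j) := ⟨rfl, rfl⟩

theorem card_adj (v : Vertex R S) : Nat.card {w // (graph m).Adj v w} = Nat.card S := by
  refine Nat.card_congr (Equiv.ofBijective (fun w => w.1.line) ⟨fun w w' h => ?_, fun j => ?_⟩)
  · exact Subtype.ext (eq_of_adj_of_adj w.2 w'.2 h)
  · exact ⟨⟨neighbor m v j, adj_neighbor v j⟩, rfl⟩

theorem card_shift_out (v : Vertex R S) : Nat.card {w // Shift D v w} = Nat.card D :=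
  Nat.card_congr
    { toFun w := ⟨w.1.pos - v.pos, w.2.pos_sub_mem⟩
      invFun d := ⟨⟨v.side, v.pos + d, v.line⟩, ⟨rfl, rfl, by simp⟩⟩
      left_inv w := Subtype.ext (Vertex.ext w.2.side_eq.symm (by simp) w.2.line_eq.symm)
      right_inv d := Subtype.ext (by simp) }

theorem card_shift_in (v : Vertex R S) : Nat.card {w // Shift D w v} = Nat.card D :=
  Nat.card_congr
    { toFun w := ⟨v.pos - w.1.pos, w.2.pos_sub_mem⟩
      invFun d := ⟨⟨v.side, v.pos - d, v.line⟩, ⟨rfl, rfl, by simp⟩⟩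
      left_inv w := Subtype.ext (Vertex.ext w.2.side_eq (by simp) w.2.line_eq)
      right_inv d := Subtype.ext (by simp) }

theorem sum_shifts_eq_zero_of_adj_of_adj {u v w x : Vertex R S} (huv : (graph m).Adj u v)
    (hwx : (graph m).Adj w x) (hvw : Shift D v w) (hxu : Shift D x u) :
    (w.pos - v.pos) + (u.pos - x.pos) = 0 := by
  have hv := pos_eq_of_adj huv
  have hx := pos_eq_of_adj hwx
  rw [hvw.side_eq, side_eq_of_adj huv, sideSign_not, hvw.line_eq, ← hxu.line_eq] at hx
  linear_combination -hv - hx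

theorem eq_or_eq_of_adj_cycle [IsDomain R] (hm : Function.Injective m) {a b c d : Vertex R S}
    (hab : (graph m).Adj a b) (hbc : (graph m).Adj b c) (hcd : (graph m).Adj c d)
    (hda : (graph m).Adj d a) : a = c ∨ b = d := by
  by_contra! h
  have hac : m a.line - m c.line ≠ 0 :=
    sub_ne_zero.2 (hm.ne fun hl => h.1 (eq_of_adj_of_adj hab.symm hbc hl))
  have hbd : m b.line - m d.line ≠ 0 :=
    sub_ne_zero.2 (hm.ne fun hl => h.2 (eq_of_adj_of_adj hbc.symm hcd hl))
  have hb := pos_eq_of_adj hab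
  have hc := pos_eq_of_adj hbc
  have hd := pos_eq_of_adj hcd
  have ha := pos_eq_of_adj hda
  rw [side_eq_of_adj hcd, side_eq_of_adj hbc, side_eq_of_adj hab] at ha
  rw [side_eq_of_adj hbc, side_eq_of_adj hab] at hd
  rw [side_eq_of_adj hab] at hc
  simp only [sideSign_not, Bool.not_not] at ha hd hc
  -- the displacements around the cycle add up to `sideSign a.side * (m a - m c) * (m b - m d)`
  exact mul_ne_zero (mul_ne_zero (sideSign_ne_zero a.side) hac) hbd
    (by linear_combination -(hb + hc + hd + ha))

variable {h0 : (0 : R) ∉ D}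

theorem eq_or_eq_of_adj_of_step_of_step {a b c : Vertex R S} (hab : (graph m).Adj a b)
    (hbc : (mixedGraph m D h0).Step b c) (hca : (mixedGraph m D h0).Step c a) :
    b = c ∨ c = a := by
  rcases hbc with hbc | hbc <;> rcases hca with hca | hca
  -- edges flip the side and arcs keep it, so a closed walk with an odd number of edges is absurd
  · simpa [side_eq_of_adj hab, side_eq_of_adj hbc] using side_eq_of_adj hca
  · exact Or.inr (eq_of_adj_of_adj hbc hab.symm hca.line_eq.symm)
  · exact Or.inl (eq_of_adj_of_adj hab hca.symm hbc.line_eq.symm)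
  · simpa [hbc.side_eq, side_eq_of_adj hab] using hca.side_eq

theorem eq_or_eq_of_adj_of_step_of_step_of_step [IsDomain R] (hm : Function.Injective m)
    (hD : ZeroSumFreeUpTo D 2) {a b c d : Vertex R S} (hab : (graph m).Adj a b)
    (hbc : (mixedGraph m D h0).Step b c) (hcd : (mixedGraph m D h0).Step c d)
    (hda : (mixedGraph m D h0).Step d a) : a = c ∨ b = d := by
  rcases hbc with hbc | hbc <;> rcases hcd with hcd | hcd <;> rcases hda with hda | hda
  · exact eq_or_eq_of_adj_cycle hm hab hbc hcd hda
  · simpa [side_eq_of_adj hab, side_eq_of_adj hbc, side_eq_of_adj hcd] using hda.side_eq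
  · simpa [side_eq_of_adj hab, side_eq_of_adj hbc, hcd.side_eq] using side_eq_of_adj hda
  · exact Or.inl (eq_of_adj_of_adj hab.symm hbc (hda.line_eq.trans hcd.line_eq))
  · simpa [side_eq_of_adj hab, hbc.side_eq, side_eq_of_adj hcd] using side_eq_of_adj hda
  · exact (hD [c.pos - b.pos, a.pos - d.pos] (by simp) (by simp)
      (by simp [hbc.pos_sub_mem, hda.pos_sub_mem])
      (by simpa using sum_shifts_eq_zero_of_adj_of_adj hab hcd hbc hda)).elim
  · exact Or.inr (eq_of_adj_of_adj hab hda.symm (hcd.line_eq.trans hbc.line_eq).symm)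
  · simpa [side_eq_of_adj hab, hbc.side_eq, hcd.side_eq] using hda.side_eq

theorem false_of_triangle (hD : ZeroSumFreeUpTo D 3) {a b c : Vertex R S}
    (hab : (mixedGraph m D h0).Step a b) (hbc : (mixedGraph m D h0).Step b c)
    (hca : (mixedGraph m D h0).Step c a) (hab' : a ≠ b) (hbc' : b ≠ c) (hca' : c ≠ a) :
    False := by
  by_cases eab : (graph m).Adj a b
  · exact (eq_or_eq_of_adj_of_step_of_step eab hbc hca).elim hbc' hca'
  by_cases ebc : (graph m).Adj b c
  · exact (eq_or_eq_of_adj_of_step_of_step ebc hca hab).elim hca' hab'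
  by_cases eca : (graph m).Adj c a
  · exact (eq_or_eq_of_adj_of_step_of_step eca hab hbc).elim hab' hbc'
  have sab : Shift D a b := hab.resolve_left eab
  have sbc : Shift D b c := hbc.resolve_left ebc
  have sca : Shift D c a := hca.resolve_left eca
  exact hD [b.pos - a.pos, c.pos - b.pos, a.pos - c.pos] (by simp) (by simp)
    (by simp [sab.pos_sub_mem, sbc.pos_sub_mem, sca.pos_sub_mem])
    (by simp only [List.sum_cons, List.sum_nil]; ring)

theorem false_of_quadrilateral [IsDomain R] (hm : Function.Injective m)
    (hD : ZeroSumFreeUpTo D 4) {a b c d : Vertex R S}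
    (hab : (mixedGraph m D h0).Step a b) (hbc : (mixedGraph m D h0).Step b c)
    (hcd : (mixedGraph m D h0).Step c d) (hda : (mixedGraph m D h0).Step d a)
    (hac : a ≠ c) (hbd : b ≠ d) : False := by
  have hD₂ := hD.mono (by norm_num : 2 ≤ 4)
  by_cases eab : (graph m).Adj a b
  · exact (eq_or_eq_of_adj_of_step_of_step_of_step hm hD₂ eab hbc hcd hda).elim hac hbd
  by_cases ebc : (graph m).Adj b c
  · exact (eq_or_eq_of_adj_of_step_of_step_of_step hm hD₂ ebc hcd hda hab).elim hbd hac.symm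
  by_cases ecd : (graph m).Adj c d
  · exact (eq_or_eq_of_adj_of_step_of_step_of_step hm hD₂ ecd hda hab hbc).elim hac.symm hbd.symm
  by_cases eda : (graph m).Adj d a
  · exact (eq_or_eq_of_adj_of_step_of_step_of_step hm hD₂ eda hab hbc hcd).elim hbd.symm hac
  have sab : Shift D a b := hab.resolve_left eab
  have sbc : Shift D b c := hbc.resolve_left ebc
  have scd : Shift D c d := hcd.resolve_left ecd
  have sda : Shift D d a := hda.resolve_left eda
  exact hD [b.pos - a.pos, c.pos - b.pos, d.pos - c.pos, a.pos - d.pos] (by simp) (by simp)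
    (by simp [sab.pos_sub_mem, sbc.pos_sub_mem, scd.pos_sub_mem, sda.pos_sub_mem])
    (by simp only [List.sum_cons, List.sum_nil]; ring)

theorem not_hasCycleOfLength_three (hD : ZeroSumFreeUpTo D 3) :
    ¬ (mixedGraph m D h0).HasCycleOfLength 3 := by
  rintro ⟨-, c, hc, hstep⟩
  exact false_of_triangle hD (hstep 0) (hstep 1) (hstep 2) (hc.ne (by decide)) (hc.ne (by decide))
    (hc.ne (by decide))

theorem not_hasCycleOfLength_four [IsDomain R] (hm : Function.Injective m)
    (hD : ZeroSumFreeUpTo D 4) : ¬ (mixedGraph m D h0).HasCycleOfLength 4 := by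
  rintro ⟨-, c, hc, hstep⟩
  exact false_of_quadrilateral hm hD (hstep 0) (hstep 1) (hstep 2) (hstep 3) (hc.ne (by decide))
    (hc.ne (by decide))

theorem hasCycleOfLength_of_shifts {n : ℕ} (hn : 3 ≤ n) (j : S) {x : ZMod n → R}
    (hx : Function.Injective x) (hD : ∀ i, x (i + 1) - x i ∈ D) :
    (mixedGraph m D h0).HasCycleOfLength n :=
  ⟨hn, fun i => ⟨false, x i, j⟩, fun _ _ h => hx (congrArg Vertex.pos h),
    fun i => Or.inr ⟨rfl, rfl, hD i⟩⟩

theorem isMixed_mixedGraph [IsDomain R] (hm : Function.Injective m) (hD : ZeroSumFreeUpTo D 4)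
    [Nonempty S] {x : ZMod 5 → R} (hx : Function.Injective x) (hxD : ∀ i, x (i + 1) - x i ∈ D) :
    (mixedGraph m D h0).IsMixed (Nat.card D) (Nat.card S) 5 := by
  refine ⟨card_shift_out, card_shift_in, card_adj,
    hasCycleOfLength_of_shifts (by norm_num) (Classical.arbitrary S) hx hxD, fun n hn => ?_⟩
  by_contra! hn5
  obtain h3 | h4 : n = 3 ∨ n = 4 := by have := hn.1; omega
  · exact not_hasCycleOfLength_three (hD.mono (by norm_num)) (h3 ▸ hn)
  · exact not_hasCycleOfLength_four hm hD (h4 ▸ hn)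

end Biaffine

section NatShifts

variable {p z : ℕ}

theorem natCast_zmod_injOn : Set.InjOn (Nat.cast : ℕ → ZMod p) (Set.Iio p) := fun a ha b hb h => by
  rwa [ZMod.natCast_eq_natCast_iff', Nat.mod_eq_of_lt ha, Nat.mod_eq_of_lt hb] at h

def natShifts (p z : ℕ) : Set (ZMod p) := Nat.cast '' Set.Icc 1 z

theorem card_natShifts (hzp : z < p) : Nat.card (natShifts p z) = z := by
  rw [Nat.card_coe_set_eq, natShifts,
    (natCast_zmod_injOn.mono fun a ha => lt_of_le_of_lt ha.2 hzp).ncard_image]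
  simp

theorem exists_sum_eq_natCast {l : List (ZMod p)} (hl : ∀ d ∈ l, d ∈ natShifts p z) :
    ∃ N : ℕ, l.length ≤ N ∧ N ≤ l.length * z ∧ l.sum = N := by
  induction l with
  | nil => exact ⟨0, le_rfl, by simp, by simp⟩
  | cons d l ih =>
    obtain ⟨⟨a, ⟨ha1, haz⟩, rfl⟩, hl'⟩ := List.forall_mem_cons.1 hl
    obtain ⟨N, hlN, hNz, hsum⟩ := ih hl'
    refine ⟨a + N, ?_, ?_, by simp [hsum]⟩
    · rw [List.length_cons]; omega
    · rw [List.length_cons, add_mul, one_mul]; omega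

theorem zeroSumFreeUpTo_natShifts {n : ℕ} (h : n * z < p) : ZeroSumFreeUpTo (natShifts p z) n := by
  intro l hne hlen hl hsum
  obtain ⟨N, hlN, hNz, hlsum⟩ := exists_sum_eq_natCast hl
  have hN : 0 < N := (List.length_pos_iff.2 hne).trans_le hlN
  have hNp : N < p := hNz.trans_lt ((Nat.mul_le_mul_right z hlen).trans_lt h)
  rw [hlsum, ZMod.natCast_eq_zero_iff] at hsum
  exact (Nat.le_of_dvd hN hsum).not_gt hNp

theorem exists_natShifts_cycle_five (h4 : 4 * z < p) (h5 : p ≤ 5 * z) :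
    ∃ x : ZMod 5 → ZMod p, Function.Injective x ∧ ∀ i, x (i + 1) - x i ∈ natShifts p z := by
  refine ⟨fun i => ((i.val * z : ℕ) : ZMod p), fun i j hij => ?_, fun i => ?_⟩
  · have hlt : ∀ k : ZMod 5, k.val * z < p := fun k => by
      have := k.val_lt
      nlinarith
    exact ZMod.val_injective 5 (Nat.eq_of_mul_eq_mul_right (by omega)
      (natCast_zmod_injOn (hlt i) (hlt j) hij))
  have hz : 1 ≤ z := by omega
  by_cases hi : i = 4
  · subst hi
    refine ⟨p - 4 * z, ⟨by omega, by omega⟩, ?_⟩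
    dsimp only
    rw [show ((4 : ZMod 5) + 1).val = 0 from rfl, show (4 : ZMod 5).val = 4 from rfl,
      Nat.cast_sub h4.le, ZMod.natCast_self]
    simp
  · have hsucc : (i + 1).val = i.val + 1 := by revert i; decide
    refine ⟨z, ⟨hz, le_rfl⟩, ?_⟩
    dsimp only
    rw [hsucc]
    push_cast
    ring

end NatShifts

theorem stmt_6_general (z p : ℕ) (hp : p.Prime)
    (hlb : 4 * z + 1 ≤ p) (hub : p ≤ 5 * z)
    (r : ℕ) (hr1 : 1 ≤ r) (hrp : r ≤ p) :
    (∃ M : MixedGraph (Fin (2 * p * r)), M.IsMixed z r 5) ∧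
      mixedCageNum z r 5 ≤ 2 * p * r := by
  have : Fact p.Prime := ⟨hp⟩
  have : Nonempty (Fin r) := ⟨⟨0, hr1⟩⟩
  have hm : Function.Injective fun j : Fin r => ((j : ℕ) : ZMod p) := fun i j h =>
    Fin.ext (natCast_zmod_injOn (i.2.trans_le hrp) (j.2.trans_le hrp) h)
  have hD : ZeroSumFreeUpTo (natShifts p z) 4 := zeroSumFreeUpTo_natShifts (by omega)
  obtain ⟨x, hx, hxD⟩ := exists_natShifts_cycle_five (by omega) hub
  have hmixed := Biaffine.isMixed_mixedGraph (h0 := hD.zero_notMem le_add_self) hm hD hx hxD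
  rw [card_natShifts (by omega), Nat.card_fin] at hmixed
  have hcard : Nat.card (Biaffine.Vertex (ZMod p) (Fin r)) = 2 * p * r := by
    rw [Biaffine.natCard_vertex, Nat.card_zmod, Nat.card_fin]
  have hM := hmixed.comap (Finite.equivFinOfCardEq hcard).symm
  exact ⟨⟨_, hM⟩, Nat.sInf_le ⟨_, hM⟩⟩

/-- Let `z ≠ 2` be a positive integer and `p` the smallest prime with
`4z + 1 ≤ p ≤ 5z`. Then for every `1 ≤ r ≤ p` there is a `[z,r;5]`-mixed
graph of order `2pr`; in particular `n[z,r;5] ≤ 2pr`. -/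
theorem stmt_6 (z p : ℕ) (hz : 1 ≤ z) (hz2 : z ≠ 2) (hp : p.Prime)
    (hlb : 4 * z + 1 ≤ p) (hub : p ≤ 5 * z)
    (hmin : ∀ q : ℕ, q.Prime → 4 * z + 1 ≤ q → q ≤ 5 * z → p ≤ q)
    (r : ℕ) (hr1 : 1 ≤ r) (hrp : r ≤ p) :
    (∃ M : MixedGraph (Fin (2 * p * r)), M.IsMixed z r 5) ∧
      mixedCageNum z r 5 ≤ 2 * p * r :=
  stmt_6_general z p hp hlb hub r hr1 hrp
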